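/- arXiv:2401.09339 — 5 statements merged into one kernel-verified Lean document; each statement's English description precedes it below -/
import Mathlib

section
/- Let A be a Hurwitz matrix with −r (r > 0) the largest real part of its eigenvalues, and let {γ_n} be a positive sequence with γ_n → 0. Then for any 0 < r' < r there exists a constant C > 0 such that for all k < n, ‖∏_{j=k}^{n} (I + γ_j A)‖ ≤ C e^{−r' ∑_{j=k}^{n} γ_j}. -/
/-!
For small `t > 0` the spectrum of `B = 1 + t • A` lies in a disc of radius smaller than
`q = 1 - r' t`, because `|1 + t μ|² ≤ 1 - 2 t r + t² ‖A‖²` when `Re μ ≤ -r`; Gelfand's formula then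
gives `‖Bⁿ‖ ≤ C qⁿ`. As soon as `γ_j ≤ t`, the factor `1 + γ_j • A = (1 - γ_j / t) • 1 + (γ_j / t) • B`
is a convex combination of `1` and `B`, so it multiplies the weighted norm `supₙ ‖Bⁿ M‖ / qⁿ` by at
most `1 - r' γ_j ≤ exp (-r' γ_j)`. The finitely many factors with `γ_j > t` cost a fixed constant,
and the norm of a real matrix is at most the norm of its complexification.
-/

open Filter Topology

section

variable {R : Type*} [NormedRing R]

def PowMulLE (B : R) (q c : ℝ) (M : R) : Prop := ∀ n : ℕ, ‖B ^ n * M‖ ≤ c * q ^ n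

namespace PowMulLE

variable {B M : R} {q c : ℝ}

theorem norm_le (h : PowMulLE B q c M) : ‖M‖ ≤ c := by simpa using h 0

theorem smul_one_add_smul_mul {𝕜 : Type*} [NormedField 𝕜] [NormedAlgebra 𝕜 R]
    (h : PowMulLE B q c M) (a b : 𝕜) :
    PowMulLE B q ((‖a‖ + ‖b‖ * q) * c) ((a • 1 + b • B) * M) := by
  intro n
  have hexpand : B ^ n * ((a • 1 + b • B) * M) = a • (B ^ n * M) + b • (B ^ (n + 1) * M) := by
    rw [add_mul, smul_mul_assoc, one_mul, smul_mul_assoc, mul_add, mul_smul_comm, mul_smul_comm,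
      pow_succ, mul_assoc]
  calc ‖B ^ n * ((a • 1 + b • B) * M)‖ ≤ ‖a‖ * ‖B ^ n * M‖ + ‖b‖ * ‖B ^ (n + 1) * M‖ := by
        rw [hexpand]
        exact (norm_add_le _ _).trans (add_le_add (norm_smul_le _ _) (norm_smul_le _ _))
    _ ≤ ‖a‖ * (c * q ^ n) + ‖b‖ * (c * q ^ (n + 1)) := by gcongr; exacts [h n, h (n + 1)]
    _ = (‖a‖ + ‖b‖ * q) * c * q ^ n := by ring

theorem list_prod {ι : Type*} (l : List ι) (x : ι → R) (w : ι → ℝ)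
    (hx : ∀ i ∈ l, ∀ c M, PowMulLE B q c M → PowMulLE B q (w i * c) (x i * M))
    (h : PowMulLE B q c 1) : PowMulLE B q ((l.map w).prod * c) (l.map x).prod := by
  induction l with
  | nil => simpa using h
  | cons i l ih =>
    simpa [mul_assoc] using
      hx i List.mem_cons_self _ _ (ih fun j hj => hx j (List.mem_cons_of_mem _ hj))

end PowMulLE

end

theorem exists_norm_pow_le_mul_pow_of_spectralRadius_lt {A : Type*} [NormedRing A]
    [NormedAlgebra ℂ A] [CompleteSpace A] {a : A} {q : ℝ}
    (h : spectralRadius ℂ a < ENNReal.ofReal q) : ∃ C > 0, ∀ n : ℕ, ‖a ^ n‖ ≤ C * q ^ n := by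
  have hq : 0 < q := ENNReal.ofReal_pos.mp (bot_le.trans_lt h)
  have hev : ∀ᶠ n : ℕ in atTop, ‖a ^ n‖ / q ^ n ≤ 1 := by
    filter_upwards [(spectrum.pow_norm_pow_one_div_tendsto_nhds_spectralRadius a).eventually
      (gt_mem_nhds h), eventually_ne_atTop 0] with n hn hn0
    rw [ENNReal.ofReal_lt_ofReal_iff hq, one_div] at hn
    rw [div_le_one (by positivity), ← Real.rpow_inv_natCast_pow (norm_nonneg _) hn0]
    exact pow_le_pow_left₀ (by positivity) hn.le n
  obtain ⟨C, hC⟩ := (isBoundedUnder_of_eventually_le hev).bddAbove_range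
  refine ⟨max C 1, by positivity, fun n => ?_⟩
  rw [← div_le_iff₀ (by positivity)]
  exact (hC (Set.mem_range_self n)).trans (le_max_left C 1)

theorem spectrum.exists_eq_one_add_mul_of_mem {𝕜 A : Type*} [Field 𝕜] [Ring A] [Algebra 𝕜 A]
    {a : A} {t μ : 𝕜} (ht : t ≠ 0) (hμ : μ ∈ spectrum 𝕜 (1 + t • a)) :
    ∃ ν ∈ spectrum 𝕜 a, μ = 1 + t * ν := by
  rw [← map_one (algebraMap 𝕜 A), ← spectrum.singleton_add_eq,
    show t • a = Units.mk0 t ht • a from rfl, spectrum.unit_smul_eq_smul] at hμ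
  obtain ⟨_, rfl, _, ⟨ν, hν, rfl⟩, rfl⟩ := hμ
  exact ⟨ν, hν, by simp⟩

theorem Complex.norm_one_add_ofReal_mul_sq (t : ℝ) (z : ℂ) :
    ‖1 + (t : ℂ) * z‖ ^ 2 = 1 + 2 * t * z.re + t ^ 2 * ‖z‖ ^ 2 := by
  rw [Complex.sq_norm, Complex.sq_norm, Complex.normSq_apply, Complex.normSq_apply]
  simp only [Complex.add_re, Complex.one_re, Complex.mul_re, Complex.ofReal_re,
    Complex.ofReal_im, zero_mul, sub_zero, Complex.add_im, Complex.one_im, Complex.mul_im,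
    add_zero, zero_add]
  ring

theorem spectralRadius_one_add_smul_lt {A : Type*} [NormedRing A] [NormedAlgebra ℂ A]
    [CompleteSpace A] {a : A} {r r' t : ℝ} (hA : ∀ μ ∈ spectrum ℂ a, μ.re ≤ -r) (ht : 0 < t)
    (htK : t * (‖a‖ * ‖(1 : A)‖) ^ 2 < 2 * (r - r')) (htr' : r' * t < 1) :
    spectralRadius ℂ (1 + (t : ℂ) • a) < ENNReal.ofReal (1 - r' * t) := by
  set K := ‖a‖ * ‖(1 : A)‖
  have hbound : ∀ μ ∈ spectrum ℂ (1 + (t : ℂ) • a), ‖μ‖ ≤ √(1 - 2 * t * r + t ^ 2 * K ^ 2) := by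
    intro μ hμ
    obtain ⟨ν, hν, rfl⟩ := spectrum.exists_eq_one_add_mul_of_mem (by exact_mod_cast ht.ne') hμ
    have hre : t * ν.re ≤ t * -r := mul_le_mul_of_nonneg_left (hA ν hν) ht.le
    have hνK : ‖ν‖ ^ 2 ≤ K ^ 2 :=
      pow_le_pow_left₀ (norm_nonneg _) (spectrum.norm_le_norm_mul_of_mem hν) 2
    apply Real.le_sqrt_of_sq_le
    rw [Complex.norm_one_add_ofReal_mul_sq]
    nlinarith
  calc spectralRadius ℂ (1 + (t : ℂ) • a) ≤ ENNReal.ofReal √(1 - 2 * t * r + t ^ 2 * K ^ 2) :=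
        iSup₂_le fun μ hμ => by
          rw [← ENNReal.ofReal_coe_nnreal, coe_nnnorm]
          exact ENNReal.ofReal_le_ofReal (hbound μ hμ)
    _ < ENNReal.ofReal (1 - r' * t) := by
      rw [ENNReal.ofReal_lt_ofReal_iff (by linarith), Real.sqrt_lt' (by linarith)]
      nlinarith [mul_lt_mul_of_pos_left htK ht, sq_nonneg (r' * t)]

theorem abs_one_sub_div_add_div_mul_le_exp {γ t r' : ℝ} (hγ : 0 ≤ γ) (ht : 0 < t) :
    |1 - γ / t| + γ / t * (1 - r' * t) ≤ Real.exp (-r' * γ + 2 / t * γ) := by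
  have hexp := Real.add_one_le_exp (-r' * γ + 2 / t * γ)
  have hγt : γ / t * (r' * t) = r' * γ := by field_simp
  have h2γt : 2 / t * γ = 2 * (γ / t) := by ring
  have : 0 ≤ γ / t := by positivity
  rcases le_total 0 (1 - γ / t) with h | h
  · rw [abs_of_nonneg h]; nlinarith
  · rw [abs_of_nonpos h]; nlinarith

theorem abs_one_sub_div_add_div_mul_le_exp_of_le {γ t r' : ℝ} (ht : 0 < t) (hγt : γ ≤ t) :
    |1 - γ / t| + γ / t * (1 - r' * t) ≤ Real.exp (-r' * γ) := by
  have h : 0 ≤ 1 - γ / t := by rw [sub_nonneg, div_le_one ht]; exact hγt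
  rw [abs_of_nonneg h]
  have : γ / t * (r' * t) = r' * γ := by field_simp
  linarith [Real.add_one_le_exp (-r' * γ)]

theorem sum_range_ite_lt_le_sum_range {g : ℕ → ℝ} (hg : ∀ j, 0 ≤ g j) (k m K : ℕ) :
    ∑ i ∈ Finset.range m, (if k + i < K then g (k + i) else 0) ≤ ∑ j ∈ Finset.range K, g j := by
  have hIco := Finset.sum_Ico_eq_sum_range (fun j => if j < K then g j else 0) k (k + m)
  rw [Nat.add_sub_cancel_left] at hIco
  rw [← hIco, ← Finset.sum_filter]
  refine Finset.sum_le_sum_of_subset_of_nonneg (fun j hj => ?_) fun j _ _ => hg j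
  simpa using (Finset.mem_filter.mp hj).2

theorem prod_range_le_exp_of_le_exp {w f g : ℕ → ℝ} {K : ℕ} (hg : ∀ j, 0 ≤ g j)
    (hw : ∀ j, w j ≤ Real.exp (f j + g j)) (hwK : ∀ j, K ≤ j → w j ≤ Real.exp (f j))
    (hw0 : ∀ j, 0 ≤ w j) (k m : ℕ) :
    ∏ i ∈ Finset.range m, w (k + i) ≤
      Real.exp (∑ i ∈ Finset.range m, f (k + i) + ∑ j ∈ Finset.range K, g j) := by
  have hpointwise :
      ∀ i, w (k + i) ≤ Real.exp (f (k + i) + if k + i < K then g (k + i) else 0) := by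
    intro i
    split_ifs with h
    · exact hw _
    · simpa using hwK _ (not_lt.mp h)
  calc ∏ i ∈ Finset.range m, w (k + i)
      ≤ ∏ i ∈ Finset.range m, Real.exp (f (k + i) + if k + i < K then g (k + i) else 0) :=
        Finset.prod_le_prod (fun i _ => hw0 _) fun i _ => hpointwise i
    _ ≤ _ := by
      rw [← Real.exp_sum, Finset.sum_add_distrib]
      gcongr
      exact sum_range_ite_lt_le_sum_range hg k m K

theorem exists_norm_list_prod_one_add_smul_le {A : Type*} [NormedRing A] [NormedAlgebra ℂ A]
    [CompleteSpace A] (a : A) {r r' : ℝ} (hA : ∀ μ ∈ spectrum ℂ a, μ.re ≤ -r) (hr' : r' < r)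
    {γ : ℕ → ℝ} (hγ : ∀ n, 0 ≤ γ n) (hγ0 : Tendsto γ atTop (𝓝 0)) :
    ∃ C > 0, ∀ k m : ℕ, ‖((List.range m).map fun i => 1 + (γ (k + i) : ℂ) • a).prod‖ ≤
      C * Real.exp (-r' * ∑ i ∈ Finset.range m, γ (k + i)) := by
  obtain ⟨t, ⟨htK, htr'⟩, ht⟩ : ∃ t : ℝ,
      (t * (‖a‖ * ‖(1 : A)‖) ^ 2 < 2 * (r - r') ∧ r' * t < 1) ∧ 0 < t := by
    have hK : ∀ᶠ t in 𝓝 (0 : ℝ), t * (‖a‖ * ‖(1 : A)‖) ^ 2 < 2 * (r - r') :=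
      (continuous_id.mul continuous_const).continuousAt.eventually_lt continuousAt_const
        (by simp; linarith)
    have hr : ∀ᶠ t in 𝓝 (0 : ℝ), r' * t < 1 :=
      (continuous_const.mul continuous_id).continuousAt.eventually_lt continuousAt_const (by simp)
    exact ((hK.and hr).filter_mono nhdsWithin_le_nhds |>.and self_mem_nhdsWithin).exists
      (f := 𝓝[>] 0)
  set B : A := 1 + (t : ℂ) • a
  set q : ℝ := 1 - r' * t
  obtain ⟨C₀, hC₀, hpow⟩ := exists_norm_pow_le_mul_pow_of_spectralRadius_lt
    (spectralRadius_one_add_smul_lt hA ht htK htr')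
  obtain ⟨K₀, hK₀⟩ := eventually_atTop.mp (hγ0.eventually (ge_mem_nhds ht))
  refine ⟨Real.exp (2 / t * ∑ j ∈ Finset.range K₀, γ j) * C₀, by positivity, fun k m => ?_⟩
  set w : ℕ → ℝ := fun j => |1 - γ j / t| + γ j / t * q
  have hfactor :
      ∀ j, 1 + (γ j : ℂ) • a = ((1 - γ j / t : ℝ) : ℂ) • 1 + ((γ j / t : ℝ) : ℂ) • B := by
    intro j
    simp only [B, smul_add, smul_smul]
    push_cast
    rw [div_mul_cancel₀ _ (by exact_mod_cast ht.ne')]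
    module
  have hprod : PowMulLE B q (((List.range m).map fun i => w (k + i)).prod * C₀)
      ((List.range m).map fun i => 1 + (γ (k + i) : ℂ) • a).prod := by
    refine PowMulLE.list_prod _ _ _ (fun i _ c M h => ?_) fun n => by rw [mul_one]; exact hpow n
    have hstep := h.smul_one_add_smul_mul ((1 - γ (k + i) / t : ℝ) : ℂ) ((γ (k + i) / t : ℝ) : ℂ)
    rwa [Complex.norm_real, Complex.norm_real, Real.norm_eq_abs,
      Real.norm_of_nonneg (div_nonneg (hγ _) ht.le), ← hfactor] at hstep
  have hw : ∏ i ∈ Finset.range m, w (k + i) ≤ Real.exp (∑ i ∈ Finset.range m, -r' * γ (k + i)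
      + ∑ j ∈ Finset.range K₀, 2 / t * γ j) :=
    prod_range_le_exp_of_le_exp (fun j => by have := hγ j; positivity)
      (fun j => abs_one_sub_div_add_div_mul_le_exp (hγ j) ht)
      (fun j hj => abs_one_sub_div_add_div_mul_le_exp_of_le ht (hK₀ j hj))
      (fun j => add_nonneg (abs_nonneg _) (mul_nonneg (div_nonneg (hγ j) ht.le) (by linarith)))
      k m
  calc _ ≤ (∏ i ∈ Finset.range m, w (k + i)) * C₀ := hprod.norm_le
    _ ≤ Real.exp (∑ i ∈ Finset.range m, -r' * γ (k + i)
      + ∑ j ∈ Finset.range K₀, 2 / t * γ j) * C₀ := by gcongr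
    _ = _ := by rw [← Finset.mul_sum, ← Finset.mul_sum, Real.exp_add]; ring

theorem Matrix.norm_toEuclideanCLM_le_norm_toEuclideanCLM_map_ofReal {n : Type*} [Fintype n]
    [DecidableEq n] (M : Matrix n n ℝ) :
    ‖Matrix.toEuclideanCLM (𝕜 := ℝ) M‖ ≤
      ‖Matrix.toEuclideanCLM (𝕜 := ℂ) (M.map (algebraMap ℝ ℂ))‖ := by
  let complexify : EuclideanSpace ℝ n → EuclideanSpace ℂ n := fun x => WithLp.toLp 2 fun i => x i
  have norm_complexify : ∀ x, ‖complexify x‖ = ‖x‖ := fun x => by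
    simp [complexify, EuclideanSpace.norm_eq]
  have toEuclideanCLM_complexify : ∀ x, Matrix.toEuclideanCLM (𝕜 := ℂ) (M.map (algebraMap ℝ ℂ))
      (complexify x) = complexify (Matrix.toEuclideanCLM (𝕜 := ℝ) M x) := fun x => by
    ext i
    simp [complexify, Matrix.mulVec, dotProduct]
  refine ContinuousLinearMap.opNorm_le_bound _ (norm_nonneg _) fun x => ?_
  rw [← norm_complexify, ← toEuclideanCLM_complexify, ← norm_complexify x]
  exact ContinuousLinearMap.le_opNorm _ _

theorem Matrix.map_ofReal_list_prod_one_add_smul {n ι : Type*} [Fintype n] [DecidableEq n]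
    (A : Matrix n n ℝ) (l : List ι) (γ : ι → ℝ) :
    (l.map fun i => (1 : Matrix n n ℝ) + γ i • A).prod.map (algebraMap ℝ ℂ) =
      (l.map fun i => (1 : Matrix n n ℂ) + (γ i : ℂ) • A.map (algebraMap ℝ ℂ)).prod := by
  rw [← RingHom.mapMatrix_apply, map_list_prod, List.map_map]
  congr 1
  refine List.map_congr_left fun i _ => ?_
  ext p q
  simp [Matrix.one_apply, apply_ite]

theorem prod_one_add_smul_hurwitz_bound_general {d : ℕ} (A : Matrix (Fin d) (Fin d) ℝ) (r : ℝ)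
    (hA : ∀ μ ∈ spectrum ℂ (A.map (algebraMap ℝ ℂ)), μ.re ≤ -r)
    (γ : ℕ → ℝ) (hγpos : ∀ n, 0 < γ n)
    (hγ0 : Filter.Tendsto γ Filter.atTop (nhds 0))
    (r' : ℝ) (hr' : r' < r) :
    ∃ C > 0, ∀ k n : ℕ, k < n →
      ‖Matrix.toEuclideanCLM (𝕜 := ℝ)
          (((List.range (n - k + 1)).map (fun i => (1 : Matrix (Fin d) (Fin d) ℝ)
            + γ (k + i) • A)).prod)‖ ≤
        C * Real.exp (-r' * ∑ j ∈ Finset.Icc k n, γ j) := by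
  obtain ⟨C, hC, hbound⟩ := exists_norm_list_prod_one_add_smul_le
    (Matrix.toEuclideanCLM (𝕜 := ℂ) (A.map (algebraMap ℝ ℂ)))
    (by rwa [AlgEquiv.spectrum_eq]) hr' (fun n => (hγpos n).le) hγ0
  refine ⟨C, hC, fun k n hkn => ?_⟩
  have hsum : ∑ j ∈ Finset.Icc k n, γ j = ∑ i ∈ Finset.range (n - k + 1), γ (k + i) := by
    rw [← Finset.Ico_add_one_right_eq_Icc, Finset.sum_Ico_eq_sum_range, Nat.sub_add_comm hkn.le]
  calc _ ≤ _ := Matrix.norm_toEuclideanCLM_le_norm_toEuclideanCLM_map_ofReal _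
    _ = _ := by
      rw [Matrix.map_ofReal_list_prod_one_add_smul, map_list_prod, List.map_map]
      simp only [Function.comp_def, map_add, map_one, map_smul]
    _ ≤ _ := hbound k (n - k + 1)
    _ = _ := by rw [hsum]

/-- If all eigenvalues of `A` (over `ℂ`) have real part `≤ -r < 0`, and `γ_n` is a positive
sequence tending to `0`, then for any `0 < r' < r` there is `C > 0` such that for all `k < n`,
`‖∏_{j=k}^{n} (I + γ_j A)‖ ≤ C e^{−r' ∑_{j=k}^{n} γ_j}`, where the product is taken in order
(as a list product over `j = k, …, n`) and `‖·‖` is the operator norm on Euclidean space. -/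
theorem prod_one_add_smul_hurwitz_bound {d : ℕ} (A : Matrix (Fin d) (Fin d) ℝ) (r : ℝ)
    (hr : 0 < r) (hA : ∀ μ ∈ spectrum ℂ (A.map (algebraMap ℝ ℂ)), μ.re ≤ -r)
    (γ : ℕ → ℝ) (hγpos : ∀ n, 0 < γ n)
    (hγ0 : Filter.Tendsto γ Filter.atTop (nhds 0))
    (r' : ℝ) (hr'0 : 0 < r') (hr' : r' < r) :
    ∃ C > 0, ∀ k n : ℕ, k < n →
      ‖Matrix.toEuclideanCLM (𝕜 := ℝ)
          (((List.range (n - k + 1)).map (fun i => (1 : Matrix (Fin d) (Fin d) ℝ)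
            + γ (k + i) • A)).prod)‖ ≤
        C * Real.exp (-r' * ∑ j ∈ Finset.Icc k n, γ j) :=
  prod_one_add_smul_hurwitz_bound_general A r hA γ hγpos hγ0 r' hr'
end

section
/- Let {γ_n} be a positive sequence with γ_n → 0 and ∑ γ_n = ∞, let b > 0, and let {w_n} be a positive sequence satisfying w_{n−1}/w_n = 1 + o(γ_n). If ε_n = O(w_n) then ∑_{k=1}^{n} γ_k e^{−b ∑_{j=k+1}^{n} γ_j} ε_k = O(w_n); if ε_n = o(w_n) then the sum is o(w_n). -/
open Filter Asymptotics

/-- Let `γ_n > 0` with `γ_n → 0` and `∑ γ_n = ∞`, let `b > 0`, and let `w_n > 0` satisfy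
`w_{n-1}/w_n = 1 + o(γ_n)`.  If `ε_n = O(w_n)` then
`∑_{k=1}^{n} γ_k e^{−b ∑_{j=k+1}^{n} γ_j} ε_k = O(w_n)`, and if `ε_n = o(w_n)` then this
sum is `o(w_n)`. -/
theorem weighted_sum_bigO_littleO (γ ε w : ℕ → ℝ) (b : ℝ) (hb : 0 < b)
    (hγpos : ∀ n, 0 < γ n)
    (hγ0 : Tendsto γ atTop (nhds 0))
    (hγdiv : Tendsto (fun n => ∑ k ∈ Finset.range n, γ k) atTop atTop)
    (hεpos : ∀ n, 0 ≤ ε n)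
    (hwpos : ∀ n, 0 < w n)
    (hw : (fun n => w (n - 1) / w n - 1) =o[atTop] γ) :
    ((ε =O[atTop] w →
      (fun n => ∑ k ∈ Finset.Icc 1 n, γ k *
          Real.exp (-b * ∑ j ∈ Finset.Icc (k + 1) n, γ j) * ε k) =O[atTop] w)
    ∧ (ε =o[atTop] w →
      (fun n => ∑ k ∈ Finset.Icc 1 n, γ k *
          Real.exp (-b * ∑ j ∈ Finset.Icc (k + 1) n, γ j) * ε k) =o[atTop] w)) := by
  set c : ℝ := b / 2 with hcdef
  have hcpos : 0 < c := by positivity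
  set S : ℕ → ℝ := fun n => ∑ k ∈ Finset.Icc 1 n, γ k *
      Real.exp (-b * ∑ j ∈ Finset.Icc (k + 1) n, γ j) * ε k with hSdef
  have hSnonneg : ∀ n, 0 ≤ S n := fun n =>
    Finset.sum_nonneg fun k _ =>
      mul_nonneg (mul_nonneg (hγpos k).le (Real.exp_pos _).le) (hεpos k)
  -- elementary inequality: exp(-x) ≤ 1 - x/2 for x ∈ [0,1]
  have key : ∀ x : ℝ, 0 ≤ x → x ≤ 1 → Real.exp (-x) ≤ 1 - x / 2 := by
    intro x h0 h1
    have hx : (0:ℝ) < 1 + x := by linarith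
    have h2 : (1 + x)⁻¹ ≤ 1 - x / 2 := by
      rw [inv_le_iff_one_le_mul₀ hx]
      nlinarith
    calc Real.exp (-x) = (Real.exp x)⁻¹ := Real.exp_neg x
      _ ≤ (1 + x)⁻¹ := inv_anti₀ hx (by linarith [Real.add_one_le_exp x])
      _ ≤ 1 - x / 2 := h2
  -- core quantitative claim
  have core : ∀ C : ℝ, 0 < C → (∀ᶠ n in atTop, ε n ≤ C * w n) →
      ∀ᶠ n in atTop, S n ≤ C * (1 + 4 / b) * w n := by
    intro C hC hεC
    have hr : ∀ᶠ n in atTop, w (n - 1) ≤ Real.exp (c * γ n) * w n := by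
      filter_upwards [hw.def hcpos] with n hn
      rw [Real.norm_eq_abs, Real.norm_eq_abs, abs_of_pos (hγpos n)] at hn
      have h1 : w (n - 1) / w n ≤ 1 + c * γ n := by
        have := (abs_le.1 hn).2; linarith
      have h2 : 1 + c * γ n ≤ Real.exp (c * γ n) := by
        have := Real.add_one_le_exp (c * γ n); linarith
      have hwn := hwpos n
      calc w (n - 1) = (w (n - 1) / w n) * w n := by field_simp
        _ ≤ Real.exp (c * γ n) * w n :=
            mul_le_mul_of_nonneg_right (h1.trans h2) hwn.le
    have hsmall : ∀ᶠ n in atTop, c * γ n ≤ 1 := by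
      have h := hγ0.eventually (eventually_lt_nhds (show (0:ℝ) < 1 / c by positivity))
      filter_upwards [h] with n hn
      have : c * γ n ≤ c * (1 / c) := mul_le_mul_of_nonneg_left hn.le hcpos.le
      rwa [mul_one_div_cancel (ne_of_gt hcpos)] at this
    obtain ⟨N, hN⟩ := eventually_atTop.1 ((eventually_ge_atTop 1).and (hr.and (hsmall.and hεC)))
    have hN1 : 1 ≤ N := (hN N le_rfl).1
    have hrN : ∀ n, N ≤ n → w (n - 1) ≤ Real.exp (c * γ n) * w n := fun n h => (hN n h).2.1
    have hsm : ∀ n, N ≤ n → c * γ n ≤ 1 := fun n h => (hN n h).2.2.1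
    have hεN : ∀ n, N ≤ n → ε n ≤ C * w n := fun n h => (hN n h).2.2.2
    -- Fact 1: growth bound for w
    have fact1 : ∀ k n, N ≤ k → k ≤ n →
        w k ≤ w n * Real.exp (c * ∑ j ∈ Finset.Icc (k + 1) n, γ j) := by
      intro k n hNk hkn
      induction n, hkn using Nat.le_induction with
      | base =>
        have : Finset.Icc (k + 1) k = ∅ := Finset.Icc_eq_empty (by omega)
        simp [this]
      | succ n hn ih =>
        have h1 : w n ≤ Real.exp (c * γ (n + 1)) * w (n + 1) := by
          have := hrN (n + 1) (by omega)
          simpa using this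
        have hsum : ∑ j ∈ Finset.Icc (k + 1) (n + 1), γ j
            = (∑ j ∈ Finset.Icc (k + 1) n, γ j) + γ (n + 1) :=
          Finset.sum_Icc_succ_top (by omega) _
        calc w k ≤ w n * Real.exp (c * ∑ j ∈ Finset.Icc (k + 1) n, γ j) := ih
          _ ≤ (Real.exp (c * γ (n + 1)) * w (n + 1)) *
              Real.exp (c * ∑ j ∈ Finset.Icc (k + 1) n, γ j) :=
            mul_le_mul_of_nonneg_right h1 (Real.exp_pos _).le
          _ = w (n + 1) * Real.exp (c * ∑ j ∈ Finset.Icc (k + 1) (n + 1), γ j) := by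
            rw [hsum, mul_add, Real.exp_add]; ring
    -- Fact 2: uniform bound on the exponential sum
    have fact2 : ∀ n, N ≤ n →
        ∑ k ∈ Finset.Icc N n, γ k * Real.exp (-c * ∑ j ∈ Finset.Icc (k + 1) n, γ j)
          ≤ 2 / c := by
      intro n hn
      set F : ℕ → ℝ := fun k => Real.exp (-c * ∑ j ∈ Finset.Icc k n, γ j) with hF
      have hterm : ∀ k, N ≤ k → k ≤ n →
          γ k * Real.exp (-c * ∑ j ∈ Finset.Icc (k + 1) n, γ j)
            ≤ (2 / c) * (F (k + 1) - F k) := by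
        intro k hNk hkn
        have hsplit : ∑ j ∈ Finset.Icc k n, γ j = γ k + ∑ j ∈ Finset.Icc (k + 1) n, γ j := by
          rw [← Finset.Ico_add_one_right_eq_Icc, Finset.sum_eq_sum_Ico_succ_bot (by omega),
            Finset.Ico_add_one_right_eq_Icc]
        have hx0 : 0 ≤ c * γ k := mul_nonneg hcpos.le (hγpos k).le
        have hx1 : c * γ k ≤ 1 := hsm k hNk
        have hek := key (c * γ k) hx0 hx1
        have hE : (0:ℝ) < Real.exp (-c * ∑ j ∈ Finset.Icc (k + 1) n, γ j) := Real.exp_pos _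
        have hFk : F k = Real.exp (-(c * γ k)) *
            Real.exp (-c * ∑ j ∈ Finset.Icc (k + 1) n, γ j) := by
          rw [hF]
          show Real.exp (-c * ∑ j ∈ Finset.Icc k n, γ j) = _
          rw [hsplit, ← Real.exp_add]
          ring_nf
        have hFk1 : F (k + 1) = Real.exp (-c * ∑ j ∈ Finset.Icc (k + 1) n, γ j) := rfl
        have h2 : (c * γ k / 2) * Real.exp (-c * ∑ j ∈ Finset.Icc (k + 1) n, γ j)
            ≤ F (k + 1) - F k := by
          rw [hFk, hFk1]
          nlinarith [mul_le_mul_of_nonneg_right hek hE.le]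
        have h3 : (2 / c) * ((c * γ k / 2) *
            Real.exp (-c * ∑ j ∈ Finset.Icc (k + 1) n, γ j))
            = γ k * Real.exp (-c * ∑ j ∈ Finset.Icc (k + 1) n, γ j) := by
          field_simp
        calc γ k * Real.exp (-c * ∑ j ∈ Finset.Icc (k + 1) n, γ j)
            = (2 / c) * ((c * γ k / 2) *
              Real.exp (-c * ∑ j ∈ Finset.Icc (k + 1) n, γ j)) := h3.symm
          _ ≤ (2 / c) * (F (k + 1) - F k) :=
            mul_le_mul_of_nonneg_left h2 (by positivity)
      have hsum : ∑ k ∈ Finset.Icc N n, (F (k + 1) - F k) = F (n + 1) - F N := by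
        rw [← Finset.Ico_add_one_right_eq_Icc, Finset.sum_Ico_eq_sum_range]
        have he : (∑ k ∈ Finset.range (n + 1 - N), (F (N + k + 1) - F (N + k)))
            = F (N + (n + 1 - N)) - F (N + 0) := Finset.sum_range_sub (fun i => F (N + i)) _
        rw [he]
        congr 2 <;> omega
      have hFN : 0 ≤ F N := (Real.exp_pos _).le
      have hFn1 : F (n + 1) = 1 := by
        have : Finset.Icc (n + 1) n = ∅ := Finset.Icc_eq_empty (by omega)
        simp [hF, this]
      calc ∑ k ∈ Finset.Icc N n, γ k * Real.exp (-c * ∑ j ∈ Finset.Icc (k + 1) n, γ j)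
          ≤ ∑ k ∈ Finset.Icc N n, (2 / c) * (F (k + 1) - F k) :=
          Finset.sum_le_sum fun k hk =>
            hterm k (Finset.mem_Icc.1 hk).1 (Finset.mem_Icc.1 hk).2
        _ = (2 / c) * (F (n + 1) - F N) := by rw [← Finset.mul_sum, hsum]
        _ ≤ 2 / c := by
          rw [hFn1]
          nlinarith [hFN, (by positivity : (0:ℝ) < 2 / c)]
    -- the tail sums of γ tend to infinity
    have hΓtend : Tendsto (fun n => ∑ j ∈ Finset.Icc N n, γ j) atTop atTop := by
      have heq : (fun n => (∑ j ∈ Finset.range (n + 1), γ j) +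
          -(∑ j ∈ Finset.range N, γ j)) =ᶠ[atTop]
          (fun n => ∑ j ∈ Finset.Icc N n, γ j) := by
        filter_upwards [eventually_ge_atTop N] with n hn
        have h := Finset.sum_range_add_sum_Ico γ (show N ≤ n + 1 by omega)
        show _ = ∑ j ∈ Finset.Icc N n, γ j
        rw [← Finset.Ico_add_one_right_eq_Icc]
        linarith
      exact Tendsto.congr' heq
        (tendsto_atTop_add_const_right _ _ (hγdiv.comp (tendsto_add_atTop_nat 1)))
    have hexp0 : Tendsto (fun n => Real.exp (-c * ∑ j ∈ Finset.Icc N n, γ j))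
        atTop (nhds 0) := by
      apply Real.tendsto_exp_atBot.comp
      have h1 : Tendsto (fun n => c * ∑ j ∈ Finset.Icc N n, γ j) atTop atTop :=
        hΓtend.const_mul_atTop hcpos
      have h2 := tendsto_neg_atBot_iff.2 h1
      refine h2.congr fun n => by ring
    set M : ℝ := ∑ k ∈ Finset.Ico 1 N, γ k * ε k with hM
    have hMnn : 0 ≤ M :=
      Finset.sum_nonneg fun k _ => mul_nonneg (hγpos k).le (hεpos k)
    have hev2 : ∀ᶠ n in atTop, Real.exp (-c * ∑ j ∈ Finset.Icc N n, γ j)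
        ≤ C * w N / (M + 1) := by
      have hpos : (0:ℝ) < C * w N / (M + 1) :=
        div_pos (mul_pos hC (hwpos N)) (by linarith)
      filter_upwards [hexp0.eventually (eventually_lt_nhds hpos)] with n hn
      exact hn.le
    filter_upwards [hev2, eventually_ge_atTop N] with n hexpb hNn
    -- split the sum
    have hsplit : S n = (∑ k ∈ Finset.Ico 1 N, γ k *
        Real.exp (-b * ∑ j ∈ Finset.Icc (k + 1) n, γ j) * ε k)
        + ∑ k ∈ Finset.Icc N n, γ k *
        Real.exp (-b * ∑ j ∈ Finset.Icc (k + 1) n, γ j) * ε k := by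
      rw [hSdef]
      show ∑ k ∈ Finset.Icc 1 n, _ = _
      rw [← Finset.Ico_add_one_right_eq_Icc, ← Finset.sum_Ico_consecutive _ hN1 (show N ≤ n + 1 by omega),
        Finset.Ico_add_one_right_eq_Icc]
    -- exp bound from fact1 at N
    have hwNbound : Real.exp (-c * ∑ j ∈ Finset.Icc N n, γ j) * w N ≤ w n := by
      have h1 : w N ≤ w n * Real.exp (c * ∑ j ∈ Finset.Icc (N + 1) n, γ j) :=
        fact1 N n le_rfl hNn
      have h2 : ∑ j ∈ Finset.Icc (N + 1) n, γ j ≤ ∑ j ∈ Finset.Icc N n, γ j :=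
        Finset.sum_le_sum_of_subset_of_nonneg
          (Finset.Icc_subset_Icc (by omega) le_rfl) (fun j _ _ => (hγpos j).le)
      have h3 : w N ≤ w n * Real.exp (c * ∑ j ∈ Finset.Icc N n, γ j) := by
        refine h1.trans (mul_le_mul_of_nonneg_left ?_ (hwpos n).le)
        exact Real.exp_le_exp.2 (by nlinarith)
      have hE : (0:ℝ) < Real.exp (-c * ∑ j ∈ Finset.Icc N n, γ j) := Real.exp_pos _
      have hid : Real.exp (-c * ∑ j ∈ Finset.Icc N n, γ j) *
          Real.exp (c * ∑ j ∈ Finset.Icc N n, γ j) = 1 := by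
        rw [← Real.exp_add]; ring_nf; exact Real.exp_zero
      calc Real.exp (-c * ∑ j ∈ Finset.Icc N n, γ j) * w N
          ≤ Real.exp (-c * ∑ j ∈ Finset.Icc N n, γ j) *
            (w n * Real.exp (c * ∑ j ∈ Finset.Icc N n, γ j)) :=
          mul_le_mul_of_nonneg_left h3 hE.le
        _ = w n * (Real.exp (-c * ∑ j ∈ Finset.Icc N n, γ j) *
            Real.exp (c * ∑ j ∈ Finset.Icc N n, γ j)) := by ring
        _ = w n := by rw [hid, mul_one]
    -- initial part
    have hinit : (∑ k ∈ Finset.Ico 1 N, γ k *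
        Real.exp (-b * ∑ j ∈ Finset.Icc (k + 1) n, γ j) * ε k) ≤ C * w n := by
      have hstep : ∀ k ∈ Finset.Ico 1 N, γ k *
          Real.exp (-b * ∑ j ∈ Finset.Icc (k + 1) n, γ j) * ε k
          ≤ (γ k * ε k) * Real.exp (-b * ∑ j ∈ Finset.Icc N n, γ j) := by
        intro k hk
        have hkN : k < N := (Finset.mem_Ico.1 hk).2
        have hΓ : ∑ j ∈ Finset.Icc N n, γ j ≤ ∑ j ∈ Finset.Icc (k + 1) n, γ j :=
          Finset.sum_le_sum_of_subset_of_nonneg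
            (Finset.Icc_subset_Icc (by omega) le_rfl) (fun j _ _ => (hγpos j).le)
        have hexple : Real.exp (-b * ∑ j ∈ Finset.Icc (k + 1) n, γ j)
            ≤ Real.exp (-b * ∑ j ∈ Finset.Icc N n, γ j) :=
          Real.exp_le_exp.2 (by nlinarith)
        calc γ k * Real.exp (-b * ∑ j ∈ Finset.Icc (k + 1) n, γ j) * ε k
            ≤ γ k * Real.exp (-b * ∑ j ∈ Finset.Icc N n, γ j) * ε k :=
              mul_le_mul_of_nonneg_right
                (mul_le_mul_of_nonneg_left hexple (hγpos k).le) (hεpos k)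
          _ = (γ k * ε k) * Real.exp (-b * ∑ j ∈ Finset.Icc N n, γ j) := by ring
      have h1 : (∑ k ∈ Finset.Ico 1 N, γ k *
          Real.exp (-b * ∑ j ∈ Finset.Icc (k + 1) n, γ j) * ε k)
          ≤ M * Real.exp (-b * ∑ j ∈ Finset.Icc N n, γ j) := by
        rw [hM, Finset.sum_mul]
        exact Finset.sum_le_sum hstep
      have hbsq : Real.exp (-b * ∑ j ∈ Finset.Icc N n, γ j)
          = Real.exp (-c * ∑ j ∈ Finset.Icc N n, γ j) *
            Real.exp (-c * ∑ j ∈ Finset.Icc N n, γ j) := by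
        rw [← Real.exp_add]
        congr 1
        rw [hcdef]; ring
      have hE : (0:ℝ) ≤ Real.exp (-c * ∑ j ∈ Finset.Icc N n, γ j) := (Real.exp_pos _).le
      have h2 : M * Real.exp (-b * ∑ j ∈ Finset.Icc N n, γ j)
          ≤ M * ((C * w N / (M + 1)) * (w n / w N)) := by
        rw [hbsq]
        apply mul_le_mul_of_nonneg_left _ hMnn
        have hwn2 : Real.exp (-c * ∑ j ∈ Finset.Icc N n, γ j) ≤ w n / w N := by
          rw [le_div_iff₀ (hwpos N)]
          exact hwNbound
        exact mul_le_mul hexpb hwn2 hE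
          (div_nonneg (mul_pos hC (hwpos N)).le (by linarith))
      have h3 : M * ((C * w N / (M + 1)) * (w n / w N)) ≤ C * w n := by
        have hwN := hwpos N
        have hwn := hwpos n
        have hM1 : (0:ℝ) < M + 1 := by linarith
        have heq : M * ((C * w N / (M + 1)) * (w n / w N)) = (M / (M + 1)) * (C * w n) := by
          field_simp
        rw [heq]
        have hfrac : M / (M + 1) ≤ 1 := by
          rw [div_le_one hM1]; linarith
        nlinarith [mul_pos hC hwn]
      linarith
    -- main part
    have hmain : (∑ k ∈ Finset.Icc N n, γ k *
        Real.exp (-b * ∑ j ∈ Finset.Icc (k + 1) n, γ j) * ε k)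
        ≤ C * (4 / b) * w n := by
      have hstep : ∀ k ∈ Finset.Icc N n, γ k *
          Real.exp (-b * ∑ j ∈ Finset.Icc (k + 1) n, γ j) * ε k
          ≤ (C * w n) * (γ k * Real.exp (-c * ∑ j ∈ Finset.Icc (k + 1) n, γ j)) := by
        intro k hk
        obtain ⟨hNk, hkn⟩ := Finset.mem_Icc.1 hk
        have h1 : ε k ≤ C * w k := hεN k hNk
        have h2 : w k ≤ w n * Real.exp (c * ∑ j ∈ Finset.Icc (k + 1) n, γ j) :=
          fact1 k n hNk hkn
        have hexpid : Real.exp (-b * ∑ j ∈ Finset.Icc (k + 1) n, γ j) *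
            Real.exp (c * ∑ j ∈ Finset.Icc (k + 1) n, γ j)
            = Real.exp (-c * ∑ j ∈ Finset.Icc (k + 1) n, γ j) := by
          rw [← Real.exp_add]
          congr 1
          rw [hcdef]; ring
        have hEb : (0:ℝ) ≤ Real.exp (-b * ∑ j ∈ Finset.Icc (k + 1) n, γ j) :=
          (Real.exp_pos _).le
        calc γ k * Real.exp (-b * ∑ j ∈ Finset.Icc (k + 1) n, γ j) * ε k
            ≤ γ k * Real.exp (-b * ∑ j ∈ Finset.Icc (k + 1) n, γ j) * (C * w k) :=
              mul_le_mul_of_nonneg_left h1 (mul_nonneg (hγpos k).le hEb)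
          _ ≤ γ k * Real.exp (-b * ∑ j ∈ Finset.Icc (k + 1) n, γ j) *
              (C * (w n * Real.exp (c * ∑ j ∈ Finset.Icc (k + 1) n, γ j))) :=
              mul_le_mul_of_nonneg_left (mul_le_mul_of_nonneg_left h2 hC.le)
                (mul_nonneg (hγpos k).le hEb)
          _ = (C * w n) * (γ k * (Real.exp (-b * ∑ j ∈ Finset.Icc (k + 1) n, γ j) *
              Real.exp (c * ∑ j ∈ Finset.Icc (k + 1) n, γ j))) := by ring
          _ = (C * w n) * (γ k * Real.exp (-c * ∑ j ∈ Finset.Icc (k + 1) n, γ j)) := by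
            rw [hexpid]
      have h2c : C * w n * (2 / c) = C * (4 / b) * w n := by
        rw [hcdef]
        field_simp
        ring
      calc (∑ k ∈ Finset.Icc N n, γ k *
          Real.exp (-b * ∑ j ∈ Finset.Icc (k + 1) n, γ j) * ε k)
          ≤ ∑ k ∈ Finset.Icc N n, (C * w n) *
            (γ k * Real.exp (-c * ∑ j ∈ Finset.Icc (k + 1) n, γ j)) :=
          Finset.sum_le_sum hstep
        _ = (C * w n) * ∑ k ∈ Finset.Icc N n,
            γ k * Real.exp (-c * ∑ j ∈ Finset.Icc (k + 1) n, γ j) := by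
          rw [Finset.mul_sum]
        _ ≤ (C * w n) * (2 / c) :=
            mul_le_mul_of_nonneg_left (fact2 n hNn) (mul_pos hC (hwpos n)).le
        _ = C * (4 / b) * w n := h2c
    calc S n ≤ C * w n + C * (4 / b) * w n := by rw [hsplit]; exact add_le_add hinit hmain
      _ = C * (1 + 4 / b) * w n := by ring
  have hK : (0:ℝ) < 1 + 4 / b := by positivity
  constructor
  · intro h
    obtain ⟨C, hC, hCw⟩ := h.exists_pos
    have hev : ∀ᶠ n in atTop, ε n ≤ C * w n := by
      filter_upwards [hCw.bound] with n hn
      rw [Real.norm_eq_abs, Real.norm_eq_abs, abs_of_pos (hwpos n)] at hn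
      exact (le_abs_self _).trans hn
    rw [isBigO_iff]
    refine ⟨C * (1 + 4 / b), ?_⟩
    filter_upwards [core C hC hev] with n hn
    rw [Real.norm_eq_abs, Real.norm_eq_abs, abs_of_nonneg (hSnonneg n),
      abs_of_pos (hwpos n)]
    exact hn
  · intro h
    rw [isLittleO_iff]
    intro δ hδ
    have hCpos : 0 < δ / (1 + 4 / b) := by positivity
    have hev : ∀ᶠ n in atTop, ε n ≤ (δ / (1 + 4 / b)) * w n := by
      filter_upwards [h.def hCpos] with n hn
      rw [Real.norm_eq_abs, Real.norm_eq_abs, abs_of_pos (hwpos n)] at hn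
      exact (le_abs_self _).trans hn
    filter_upwards [core _ hCpos hev] with n hn
    rw [Real.norm_eq_abs, Real.norm_eq_abs, abs_of_nonneg (hSnonneg n),
      abs_of_pos (hwpos n)]
    calc S n ≤ (δ / (1 + 4 / b)) * (1 + 4 / b) * w n := hn
      _ = δ * w n := by rw [div_mul_cancel₀ _ (ne_of_gt hK)]
end

section
/- Let β_n = (n+1)^{−b} and γ_n = (n+1)^{−a} with 0.5 < a < b ≤ 1, and for any integer k ≥ 1 set η_n = β_n² γ_n^{−2} ω_n² + (β_n γ_n^{−1})^k + √β_n, where {ω_n} is a positive bounded sequence with ω_n/ω_{n+1} = 1 + o(γ_n). Then η_n/η_{n+1} = 1 + o(γ_n). -/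
open Filter Asymptotics

/-! The property `f n / f (n + 1) = 1 + o(γ n)` is stable under products and powers (for
bounded `γ`), under square roots, and under sums of positive sequences, since the ratio of a
sum is a weighted mean of the ratios of its summands. Every power `(n + 1) ^ c` has it because
its ratio is `1 + O(1 / n)` and `1 / n = o(n ^ (-a))` for `a < 1`; `η` is assembled from such
powers and `ω` by these operations. -/

theorem abs_add_div_add_sub_one_le {x y x' y' : ℝ} (hx' : 0 < x') (hy' : 0 < y') :
    |(x + y) / (x' + y') - 1| ≤ |x / x' - 1| + |y / y' - 1| := by
  set u := x / x' - 1
  set v := y / y' - 1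
  have hmediant : (x + y) / (x' + y') - 1 = (u * x' + v * y') / (x' + y') := by
    simp only [u, v]; field_simp; ring
  rw [hmediant, abs_div, abs_of_pos (add_pos hx' hy'), div_le_iff₀ (add_pos hx' hy')]
  calc |u * x' + v * y'| ≤ |u| * x' + |v| * y' := by
        simpa only [abs_mul, abs_of_pos hx', abs_of_pos hy'] using abs_add_le (u * x') (v * y')
    _ ≤ (|u| + |v|) * (x' + y') := by nlinarith [abs_nonneg u, abs_nonneg v]

theorem abs_sqrt_sub_one_le {x : ℝ} (hx : 0 ≤ x) : |√x - 1| ≤ |x - 1| := by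
  have hfactor : x - 1 = (√x - 1) * (√x + 1) := by
    linear_combination -Real.sq_sqrt hx
  rw [hfactor, abs_mul]
  exact le_mul_of_one_le_right (abs_nonneg _)
    ((le_add_iff_nonneg_left 1).2 (Real.sqrt_nonneg x) |>.trans (le_abs_self _))

def RatioIsOneAddLittleO (g f : ℕ → ℝ) : Prop :=
  (fun n => f n / f (n + 1) - 1) =o[atTop] g

namespace RatioIsOneAddLittleO

variable {g f h : ℕ → ℝ}

theorem mul (hg : g =O[atTop] (fun _ => (1 : ℝ))) (hf : RatioIsOneAddLittleO g f)
    (hh : RatioIsOneAddLittleO g h) : RatioIsOneAddLittleO g (f * h) := by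
  have hexpand : (fun n => (f * h) n / (f * h) (n + 1) - 1) = fun n =>
      (f n / f (n + 1) - 1) + (h n / h (n + 1) - 1)
        + (f n / f (n + 1) - 1) * (h n / h (n + 1) - 1) := by
    funext n
    rw [Pi.mul_apply, Pi.mul_apply, mul_div_mul_comm]
    ring
  have hprod := hf.mul_isBigO (hh.isBigO.trans hg)
  simp only [mul_one] at hprod
  rw [RatioIsOneAddLittleO, hexpand]
  exact (hf.add hh).add hprod

theorem pow (hg : g =O[atTop] (fun _ => (1 : ℝ))) (hf : RatioIsOneAddLittleO g f) :
    ∀ m : ℕ, RatioIsOneAddLittleO g (f ^ m)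
  | 0 => by simp [RatioIsOneAddLittleO]
  | m + 1 => by rw [pow_succ]; exact (hf.pow hg m).mul hg hf

theorem add (hf₀ : ∀ n, 0 < f n) (hh₀ : ∀ n, 0 < h n) (hf : RatioIsOneAddLittleO g f)
    (hh : RatioIsOneAddLittleO g h) : RatioIsOneAddLittleO g (f + h) := by
  refine IsBigO.trans_isLittleO (IsBigO.of_bound 1 (Eventually.of_forall fun n => ?_))
    (hf.norm_left.add hh.norm_left)
  simp only [Pi.add_apply, one_mul, Real.norm_eq_abs]
  exact (abs_add_div_add_sub_one_le (hf₀ (n + 1)) (hh₀ (n + 1))).trans (le_abs_self _)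

theorem sqrt (hf₀ : ∀ n, 0 ≤ f n) (hf : RatioIsOneAddLittleO g f) :
    RatioIsOneAddLittleO g (fun n => √(f n)) := by
  refine IsBigO.trans_isLittleO (IsBigO.of_bound 1 (Eventually.of_forall fun n => ?_)) hf
  rw [← Real.sqrt_div' _ (hf₀ (n + 1)), one_mul, Real.norm_eq_abs, Real.norm_eq_abs]
  exact abs_sqrt_sub_one_le (div_nonneg (hf₀ n) (hf₀ (n + 1)))

end RatioIsOneAddLittleO

theorem isLittleO_rpow_rpow_atTop {p q : ℝ} (hpq : p < q) :
    (fun x : ℝ => x ^ p) =o[atTop] fun x => x ^ q := by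
  refine (isLittleO_iff_tendsto' ((eventually_gt_atTop 0).mono fun x hx h0 =>
    absurd h0 (Real.rpow_pos_of_pos hx q).ne')).2 ?_
  refine (tendsto_rpow_neg_atTop (sub_pos.2 hpq)).congr' ?_
  filter_upwards [eventually_gt_atTop 0] with x hx
  rw [← Real.rpow_sub hx, neg_sub]

theorem tendsto_natCast_add_one_atTop : Tendsto (fun n : ℕ => (n : ℝ) + 1) atTop atTop :=
  tendsto_atTop_add_const_right _ _ tendsto_natCast_atTop_atTop

theorem isLittleO_natCast_add_one_rpow {p q : ℝ} (hpq : p < q) :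
    (fun n : ℕ => ((n : ℝ) + 1) ^ p) =o[atTop] fun n => ((n : ℝ) + 1) ^ q :=
  (isLittleO_rpow_rpow_atTop hpq).comp_tendsto tendsto_natCast_add_one_atTop

theorem RatioIsOneAddLittleO.natCast_add_one_rpow {g : ℕ → ℝ} (hg : (fun n : ℕ => ((n : ℝ) + 1)⁻¹) =o[atTop] g)
    (c : ℝ) : RatioIsOneAddLittleO g (fun n => ((n : ℝ) + 1) ^ c) := by
  have hderiv : HasDerivAt (fun t : ℝ => (1 + t) ^ (-c)) _ 0 :=
    ((hasDerivAt_id (0 : ℝ)).const_add 1).rpow_const (Or.inl (by norm_num))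
  have hratio : ∀ n : ℕ, ((n : ℝ) + 1) ^ c / (((n + 1 : ℕ) : ℝ) + 1) ^ c - 1
      = (1 + ((n : ℝ) + 1)⁻¹) ^ (-c) - (1 + 0) ^ (-c) := by
    intro n
    have hn : (0 : ℝ) < (n : ℝ) + 1 := by positivity
    have hsucc : (((n + 1 : ℕ) : ℝ) + 1) = ((n : ℝ) + 1) * (1 + ((n : ℝ) + 1)⁻¹) := by
      push_cast; field_simp
    rw [hsucc, Real.mul_rpow hn.le (by positivity), div_mul_cancel_left₀ (by positivity),
      Real.rpow_neg (by positivity), add_zero, Real.one_rpow]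
  have hbigO := hderiv.isBigO_sub.comp_tendsto
    (tendsto_inv_atTop_zero.comp tendsto_natCast_add_one_atTop)
  unfold RatioIsOneAddLittleO
  simp only [hratio]
  simp only [Function.comp_def, sub_zero] at hbigO
  exact hbigO.trans_isLittleO hg

theorem eta_ratio_asymptotics_general (a b : ℝ) (ha : 1 / 2 < a) (hab : a < b) (hb : b ≤ 1)
    (ω : ℕ → ℝ) (hωpos : ∀ n, 0 < ω n)
    (hω : (fun n => ω n / ω (n + 1) - 1) =o[atTop] fun n : ℕ => ((n + 1 : ℝ)) ^ (-a))
    (k : ℕ) :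
    (fun n : ℕ =>
        ((((n + 1 : ℝ)) ^ (-b)) ^ 2 * ((((n + 1 : ℝ)) ^ (-a))⁻¹) ^ 2 * ω n ^ 2
          + (((n + 1 : ℝ)) ^ (-b) * (((n + 1 : ℝ)) ^ (-a))⁻¹) ^ k
          + Real.sqrt (((n + 1 : ℝ)) ^ (-b))) /
        ((((n + 2 : ℝ)) ^ (-b)) ^ 2 * ((((n + 2 : ℝ)) ^ (-a))⁻¹) ^ 2 * ω (n + 1) ^ 2
          + (((n + 2 : ℝ)) ^ (-b) * (((n + 2 : ℝ)) ^ (-a))⁻¹) ^ k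
          + Real.sqrt (((n + 2 : ℝ)) ^ (-b))) - 1)
      =o[atTop] fun n : ℕ => ((n + 1 : ℝ)) ^ (-a) := by
  let β : ℕ → ℝ := fun n => ((n : ℝ) + 1) ^ (-b)
  let γ : ℕ → ℝ := fun n => ((n : ℝ) + 1) ^ (-a)
  have hγ_bdd : γ =O[atTop] fun _ => (1 : ℝ) := by
    simpa only [Real.rpow_zero] using
      (isLittleO_natCast_add_one_rpow (show -a < 0 by linarith)).isBigO
  have hinv_γ : (fun n : ℕ => ((n : ℝ) + 1)⁻¹) =o[atTop] γ := by
    simpa only [Real.rpow_neg_one] using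
      isLittleO_natCast_add_one_rpow (show (-1 : ℝ) < -a by linarith)
  have hβ : RatioIsOneAddLittleO γ β := RatioIsOneAddLittleO.natCast_add_one_rpow hinv_γ (-b)
  have hγ' : RatioIsOneAddLittleO γ γ⁻¹ := by
    have : γ⁻¹ = fun n : ℕ => ((n : ℝ) + 1) ^ a :=
      funext fun n => by simp [γ, Real.rpow_neg (by positivity : (0 : ℝ) ≤ n + 1)]
    exact this ▸ RatioIsOneAddLittleO.natCast_add_one_rpow hinv_γ a
  have hη : RatioIsOneAddLittleO γ
      (β ^ 2 * γ⁻¹ ^ 2 * ω ^ 2 + (β * γ⁻¹) ^ k + fun n => √(β n)) := by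
    have hpos : ∀ n, 0 < β n ^ 2 * (γ n)⁻¹ ^ 2 * ω n ^ 2 ∧ 0 < (β n * (γ n)⁻¹) ^ k :=
      fun n => by have := hωpos n; constructor <;> positivity
    refine .add (fun n => add_pos (hpos n).1 (hpos n).2) (fun n => by positivity)
      (.add (fun n => (hpos n).1) (fun n => (hpos n).2) ?_ ?_) (.sqrt (fun n => by positivity) hβ)
    · exact ((hβ.pow hγ_bdd 2).mul hγ_bdd (hγ'.pow hγ_bdd 2)).mul hγ_bdd
        (RatioIsOneAddLittleO.pow hγ_bdd hω 2)
    · exact (hβ.mul hγ_bdd hγ').pow hγ_bdd k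
  refine (hη : _ =o[atTop] γ).congr_left fun n => ?_
  simp only [Pi.add_apply, Pi.mul_apply, Pi.pow_apply, Pi.inv_apply, β, γ]
  push_cast
  ring_nf

/-- With `β_n = (n+1)^{-b}`, `γ_n = (n+1)^{-a}`, `1/2 < a < b ≤ 1`, a positive bounded
sequence `ω_n` with `ω_n/ω_{n+1} = 1 + o(γ_n)`, and any integer `k ≥ 1`, the sequence
`η_n = β_n² γ_n^{-2} ω_n² + (β_n γ_n^{-1})^k + √β_n` also satisfies
`η_n/η_{n+1} = 1 + o(γ_n)`. -/
theorem eta_ratio_asymptotics (a b : ℝ) (ha : 1 / 2 < a) (hab : a < b) (hb : b ≤ 1)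
    (ω : ℕ → ℝ) (hωpos : ∀ n, 0 < ω n) (hωbdd : BddAbove (Set.range ω))
    (hω : (fun n => ω n / ω (n + 1) - 1) =o[atTop] fun n : ℕ => ((n + 1 : ℝ)) ^ (-a))
    (k : ℕ) (hk : 1 ≤ k) :
    (fun n : ℕ =>
        ((((n + 1 : ℝ)) ^ (-b)) ^ 2 * ((((n + 1 : ℝ)) ^ (-a))⁻¹) ^ 2 * ω n ^ 2
          + (((n + 1 : ℝ)) ^ (-b) * (((n + 1 : ℝ)) ^ (-a))⁻¹) ^ k
          + Real.sqrt (((n + 1 : ℝ)) ^ (-b))) /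
        ((((n + 2 : ℝ)) ^ (-b)) ^ 2 * ((((n + 2 : ℝ)) ^ (-a))⁻¹) ^ 2 * ω (n + 1) ^ 2
          + (((n + 2 : ℝ)) ^ (-b) * (((n + 2 : ℝ)) ^ (-a))⁻¹) ^ k
          + Real.sqrt (((n + 2 : ℝ)) ^ (-b))) - 1)
      =o[atTop] fun n : ℕ => ((n + 1 : ℝ)) ^ (-a) :=
  eta_ratio_asymptotics_general a b ha hab hb ω hωpos hω k
end

section
/- Let P be an ergodic transition matrix on a finite state space Ξ with stationary distribution μ, and let h : Ξ → ℝ^d satisfy ∑_i μ_i h(i) = 0. Define m(i) = ∑_j ∑_{k=0}^{∞} (P − 𝟙μᵀ)^k_{i,j} h(j) = ∑_j (I − P + 𝟙μᵀ)^{−1}_{i,j} h(j). Then m solves the Poisson equation h(i) = m(i) − (P m)(i) for every i ∈ Ξ, where (P m)(i) = ∑_j P_{i,j} m(j). -/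
open scoped Matrix

/-- Poisson equation: let `P` be an ergodic row-stochastic matrix on a finite state space `Ξ`
with stationary distribution `μ` (`μᵀ P = μᵀ`, `P 𝟙 = 𝟙`), let `I − P + 𝟙μᵀ` be invertible,
and let `h : Ξ → ℝ^d` have zero mean under `μ`.  Then
`m(i) = ∑_j (I − P + 𝟙μᵀ)⁻¹_{i,j} h(j)` solves `h(i) = m(i) − (P m)(i)` for every `i`,
where `(P m)(i) = ∑_j P_{i,j} m(j)`. -/
theorem poisson_equation_solution {Ξ : Type*} [Fintype Ξ] [DecidableEq Ξ] {d : ℕ}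
    (P : Matrix Ξ Ξ ℝ) (μ : Ξ → ℝ)
    (hstoch : ∀ i, ∑ j, P i j = 1)
    (hstat : ∀ j, ∑ i, μ i * P i j = μ j)
    (hinv : IsUnit ((1 : Matrix Ξ Ξ ℝ) - P + Matrix.of fun _ j => μ j))
    (h : Ξ → EuclideanSpace ℝ (Fin d))
    (hmean : ∑ i, μ i • h i = 0) :
    ∀ i, h i =
      (∑ j, ((((1 : Matrix Ξ Ξ ℝ) - P + Matrix.of fun _ j => μ j)⁻¹ : Matrix Ξ Ξ ℝ) i j) • h j)
      - ∑ j, P i j • (∑ l,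
        ((((1 : Matrix Ξ Ξ ℝ) - P + Matrix.of fun _ j => μ j)⁻¹ : Matrix Ξ Ξ ℝ) j l) • h l) := by
  intro i
  set A : Matrix Ξ Ξ ℝ := (1 : Matrix Ξ Ξ ℝ) - P + Matrix.of fun _ j => μ j with hAdef
  set B : Matrix Ξ Ξ ℝ := A⁻¹ with hBdef
  have hdet : IsUnit A.det := (Matrix.isUnit_iff_isUnit_det A).mp hinv
  have hAB : A * B = 1 := Matrix.mul_nonsing_inv A hdet
  set s : ℝ := ∑ k, μ k with hs
  -- μᵀ A = s μᵀ
  have hμA : ∀ j, ∑ k, μ k * A k j = s * μ j := by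
    intro j
    have hterm : ∀ k, μ k * A k j
        = (μ k * (if k = j then (1:ℝ) else 0) - μ k * P k j) + μ k * μ j := by
      intro k
      simp only [hAdef, Matrix.add_apply, Matrix.sub_apply, Matrix.one_apply, Matrix.of_apply]
      ring
    rw [Finset.sum_congr rfl fun k _ => hterm k, Finset.sum_add_distrib,
      Finset.sum_sub_distrib]
    have e1 : ∑ k, μ k * (if k = j then (1:ℝ) else 0) = μ j := by simp
    have e2 : ∑ k, μ k * μ j = s * μ j := by rw [hs, ← Finset.sum_mul]
    rw [e1, e2, hstat j]; ring
  -- s • (μᵀ B) = μᵀ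
  have hvA : ∀ j, s * (∑ k, μ k * B k j) = μ j := by
    intro j
    calc s * (∑ k, μ k * B k j) = ∑ k, (s * μ k) * B k j := by
          rw [Finset.mul_sum]; apply Finset.sum_congr rfl; intro k _; ring
      _ = ∑ k, (∑ l, μ l * A l k) * B k j := by
          apply Finset.sum_congr rfl; intro k _; rw [hμA k]
      _ = ∑ k, ∑ l, (μ l * A l k) * B k j := by
          apply Finset.sum_congr rfl; intro k _; rw [Finset.sum_mul]
      _ = ∑ l, ∑ k, (μ l * A l k) * B k j := Finset.sum_comm
      _ = ∑ l, μ l * (A * B) l j := by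
          apply Finset.sum_congr rfl; intro l _
          rw [Matrix.mul_apply, Finset.mul_sum]
          apply Finset.sum_congr rfl; intro k _; ring
      _ = μ j := by
          rw [hAB]
          simp [Matrix.one_apply, Finset.sum_ite_eq', mul_comm]
  -- the correction term vanishes
  have hv0 : ∑ j, (∑ k, μ k * B k j) • h j = 0 := by
    by_cases hs0 : s = 0
    · have hμ0 : ∀ j, μ j = 0 := by
        intro j
        have := hvA j
        rw [hs0, zero_mul] at this
        exact this.symm
      have : ∀ j, (∑ k, μ k * B k j) = 0 := by
        intro j; simp [hμ0]
      simp [this]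
    · have hvj : ∀ j, (∑ k, μ k * B k j) = s⁻¹ * μ j := by
        intro j
        field_simp
        rw [mul_comm, hvA j]
      calc ∑ j, (∑ k, μ k * B k j) • h j = ∑ j, (s⁻¹ * μ j) • h j := by
            apply Finset.sum_congr rfl; intro j _; rw [hvj j]
        _ = s⁻¹ • ∑ j, μ j • h j := by
            rw [Finset.smul_sum]
            apply Finset.sum_congr rfl; intro j _; rw [mul_smul]
        _ = 0 := by rw [hmean, smul_zero]
  -- now the main computation
  have hPB : ∑ j, P i j • (∑ l, B j l • h l) = ∑ l, ((P * B) i l) • h l := by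
    calc ∑ j, P i j • (∑ l, B j l • h l) = ∑ j, ∑ l, (P i j * B j l) • h l := by
          apply Finset.sum_congr rfl; intro j _
          rw [Finset.smul_sum]
          apply Finset.sum_congr rfl; intro l _; rw [mul_smul]
      _ = ∑ l, ∑ j, (P i j * B j l) • h l := Finset.sum_comm
      _ = ∑ l, ((P * B) i l) • h l := by
          apply Finset.sum_congr rfl; intro l _
          rw [Matrix.mul_apply, Finset.sum_smul]
  rw [hPB]
  have hdiff : ∀ l, B i l - (P * B) i l
      = (if i = l then (1:ℝ) else 0) - ∑ k, μ k * B k l := by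
    intro l
    have h1 : ((1 - P) * B) i l = B i l - (P * B) i l := by
      rw [Matrix.sub_mul, Matrix.one_mul, Matrix.sub_apply]
    have h2 : (1 - P : Matrix Ξ Ξ ℝ) = A - Matrix.of fun _ j => μ j := by
      rw [hAdef, add_sub_cancel_right]
    rw [← h1, h2, Matrix.sub_mul, Matrix.sub_apply, hAB]
    simp [Matrix.one_apply, Matrix.mul_apply, Matrix.of_apply]
  calc h i = ∑ l, (if i = l then (1:ℝ) else 0) • h l - ∑ l, (∑ k, μ k * B k l) • h l := by
        rw [hv0, sub_zero]
        simp [Finset.sum_ite_eq]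
    _ = ∑ l, ((if i = l then (1:ℝ) else 0) - ∑ k, μ k * B k l) • h l := by
        rw [← Finset.sum_sub_distrib]
        apply Finset.sum_congr rfl; intro l _; rw [sub_smul]
    _ = ∑ l, (B i l - (P * B) i l) • h l := by
        apply Finset.sum_congr rfl; intro l _; rw [hdiff l]
    _ = ∑ l, B i l • h l - ∑ l, ((P * B) i l) • h l := by
        rw [← Finset.sum_sub_distrib]
        apply Finset.sum_congr rfl; intro l _; rw [sub_smul]
end

section
/- Let β_n = (n+1)^{−b} and γ_n = (n+1)^{−a} with 1/2 < a < b ≤ 1, s_n = ∑_{k=1}^n γ_k, and T' > 0. Then ∑_{k=1}^{n} β_k γ_k e^{−(s_n − s_k) T'} = O(β_n), and consequently β_n^{−1/2} γ_n^{−1/2} ∑_{k=1}^{n} β_k γ_k e^{−(s_n − s_k) T'} = O(β_n^{1/2} γ_n^{−1/2}) = o(1). -/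
open Filter Asymptotics

private lemma tele_sum (g : ℕ → ℝ) (m : ℕ) :
    ∑ k ∈ Finset.Icc 1 m, (g k - g (k - 1)) = g m - g 0 := by
  induction m with
  | zero => simp
  | succ p ih =>
      rw [Finset.sum_Icc_succ_top (Nat.le_add_left 1 p), ih]
      simp [Nat.add_sub_cancel]

private lemma tele_bound (T' : ℝ) (hT' : 0 < T') (g : ℕ → ℝ) (hg0 : ∀ k, 0 < g k)
    (hg1 : ∀ k, g k ≤ 1) (n : ℕ) :
    ∑ k ∈ Finset.Icc 1 n,
      g k * Real.exp (-((∑ j ∈ Finset.Icc 1 n, g j) - ∑ j ∈ Finset.Icc 1 k, g j) * T')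
      ≤ Real.exp T' / T' := by
  set s : ℕ → ℝ := fun m => ∑ j ∈ Finset.Icc 1 m, g j with hs
  set f : ℕ → ℝ := fun k => Real.exp (-(s n - s k) * T') with hf
  have hstep : ∀ k : ℕ, 1 ≤ k → s k = s (k - 1) + g k := by
    intro k hk
    obtain ⟨j, rfl⟩ : ∃ j, k = j + 1 := ⟨k - 1, by omega⟩
    simp only [hs, Nat.add_sub_cancel]
    rw [Finset.sum_Icc_succ_top (Nat.le_add_left 1 j)]
  have key : ∀ k ∈ Finset.Icc 1 n,
      g k * f k ≤ (Real.exp T' / T') * (f k - f (k - 1)) := by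
    intro k hk
    have hk1 : 1 ≤ k := (Finset.mem_Icc.mp hk).1
    have hfk : f (k - 1) = f k * Real.exp (-(g k * T')) := by
      rw [hf]
      simp only
      rw [← Real.exp_add]
      congr 1
      rw [hstep k hk1]
      ring
    have hx : 0 < g k * T' := mul_pos (hg0 k) hT'
    have hxT : g k * T' ≤ T' := by
      have := hg1 k
      nlinarith
    -- x ≤ exp T' * (1 - exp (-x)) for 0 < x ≤ T'
    have hmain : g k * T' ≤ Real.exp T' * (1 - Real.exp (-(g k * T'))) := by
      set x := g k * T' with hxdef
      have h1 : x + 1 ≤ Real.exp x := Real.add_one_le_exp x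
      have h2 : Real.exp x ≤ Real.exp T' := Real.exp_le_exp.mpr hxT
      have h3 : Real.exp x * Real.exp (-x) = 1 := by
        rw [← Real.exp_add]; simp
      have h4 : 0 < Real.exp (-x) := Real.exp_pos _
      have h5 : Real.exp (-x) < 1 := by
        rw [Real.exp_lt_one_iff]; linarith
      nlinarith
    have hfkpos : 0 < f k := Real.exp_pos _
    have : g k ≤ (Real.exp T' / T') * (1 - Real.exp (-(g k * T'))) := by
      rw [div_mul_eq_mul_div, le_div_iff₀ hT']
      linarith
    calc g k * f k ≤ ((Real.exp T' / T') * (1 - Real.exp (-(g k * T')))) * f k :=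
          mul_le_mul_of_nonneg_right this hfkpos.le
      _ = (Real.exp T' / T') * (f k - f (k - 1)) := by rw [hfk]; ring
  calc ∑ k ∈ Finset.Icc 1 n,
        g k * Real.exp (-((∑ j ∈ Finset.Icc 1 n, g j) - ∑ j ∈ Finset.Icc 1 k, g j) * T')
      = ∑ k ∈ Finset.Icc 1 n, g k * f k := rfl
    _ ≤ ∑ k ∈ Finset.Icc 1 n, (Real.exp T' / T') * (f k - f (k - 1)) :=
        Finset.sum_le_sum key
    _ = (Real.exp T' / T') * (f n - f 0) := by rw [← Finset.mul_sum, tele_sum]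
    _ ≤ Real.exp T' / T' := by
        have h1 : f n = 1 := by simp [hf]
        have h2 : 0 < f 0 := Real.exp_pos _
        have h3 : 0 < Real.exp T' / T' := div_pos (Real.exp_pos _) hT'
        nlinarith

/-- With `β_n = (n+1)^{-b}`, `γ_n = (n+1)^{-a}`, `1/2 < a < b ≤ 1`, `s_n = ∑_{k=1}^n γ_k`,
and `T' > 0`: `∑_{k=1}^{n} β_k γ_k e^{−(s_n − s_k) T'} = O(β_n)`, and consequently
`β_n^{-1/2} γ_n^{-1/2} ∑_{k=1}^{n} β_k γ_k e^{−(s_n − s_k) T'} = o(1)`. -/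
theorem beta_gamma_exp_sum_bigO (a b T' : ℝ) (ha : 1 / 2 < a) (hab : a < b) (hb : b ≤ 1)
    (hT' : 0 < T') :
    ((fun n : ℕ => ∑ k ∈ Finset.Icc 1 n,
          ((k + 1 : ℝ)) ^ (-b) * ((k + 1 : ℝ)) ^ (-a) *
            Real.exp (-((∑ j ∈ Finset.Icc 1 n, ((j + 1 : ℝ)) ^ (-a))
              - ∑ j ∈ Finset.Icc 1 k, ((j + 1 : ℝ)) ^ (-a)) * T'))
        =O[atTop] fun n : ℕ => ((n + 1 : ℝ)) ^ (-b))
    ∧ ((fun n : ℕ => (Real.sqrt (((n + 1 : ℝ)) ^ (-b)))⁻¹ *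
          (Real.sqrt (((n + 1 : ℝ)) ^ (-a)))⁻¹ *
          ∑ k ∈ Finset.Icc 1 n,
          ((k + 1 : ℝ)) ^ (-b) * ((k + 1 : ℝ)) ^ (-a) *
            Real.exp (-((∑ j ∈ Finset.Icc 1 n, ((j + 1 : ℝ)) ^ (-a))
              - ∑ j ∈ Finset.Icc 1 k, ((j + 1 : ℝ)) ^ (-a)) * T'))
        =o[atTop] fun _ : ℕ => (1 : ℝ)) := by
  have ha0 : 0 < a := by linarith
  have hb0 : 0 < b := by linarith
  have ha1 : a < 1 := lt_of_lt_of_le hab hb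
  have hab1 : 1 < a + b := by linarith
  -- basic positivity
  have hxpos : ∀ k : ℕ, (0:ℝ) < (k:ℝ) + 1 := fun k => by positivity
  have hγpos : ∀ k : ℕ, (0:ℝ) < ((k:ℝ) + 1) ^ (-a) :=
    fun k => Real.rpow_pos_of_pos (hxpos k) _
  have hβpos : ∀ k : ℕ, (0:ℝ) < ((k:ℝ) + 1) ^ (-b) :=
    fun k => Real.rpow_pos_of_pos (hxpos k) _
  have hγle1 : ∀ k : ℕ, ((k:ℝ) + 1) ^ (-a) ≤ 1 :=
    fun k => Real.rpow_le_one_of_one_le_of_nonpos (by exact_mod_cast le_add_of_nonneg_left (Nat.cast_nonneg k)) (by linarith)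

  have hγle1 : ∀ k : ℕ, ((k:ℝ) + 1) ^ (-a) ≤ 1 :=
    fun k => Real.rpow_le_one_of_one_le_of_nonpos (by exact_mod_cast le_add_of_nonneg_left (Nat.cast_nonneg k)) (by linarith)
  have htend : Tendsto (fun n : ℕ => (n:ℝ) + 1) atTop atTop :=
    tendsto_atTop_add_const_right _ 1 tendsto_natCast_atTop_atTop
  -- summability constant
  have hsum : Summable (fun k : ℕ => ((k:ℝ) + 1) ^ (-(a+b))) := by
    have h0 : Summable (fun n : ℕ => (n:ℝ) ^ (-(a+b))) :=
      Real.summable_nat_rpow.mpr (by linarith)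
    have h1 := (summable_nat_add_iff 1).mpr h0
    refine h1.congr fun n => ?_
    push_cast
    ring_nf
  set C0 : ℝ := ∑' k : ℕ, ((k:ℝ) + 1) ^ (-(a+b)) with hC0def
  have hC0nonneg : 0 ≤ C0 :=
    tsum_nonneg fun k => (Real.rpow_pos_of_pos (hxpos k) _).le
  have hβγ : ∀ k : ℕ, ((k:ℝ) + 1) ^ (-b) * ((k:ℝ) + 1) ^ (-a) = ((k:ℝ) + 1) ^ (-(a+b)) := by
    intro k
    rw [← Real.rpow_add (hxpos k), show -b + -a = -(a+b) by ring]
  have hC0 : ∀ n : ℕ, ∑ k ∈ Finset.Icc 1 n, ((k:ℝ) + 1) ^ (-b) * ((k:ℝ) + 1) ^ (-a) ≤ C0 := by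
    intro n
    rw [Finset.sum_congr rfl fun k _ => hβγ k]
    exact Summable.sum_le_tsum _ (fun i _ => (Real.rpow_pos_of_pos (hxpos i) _).le) hsum
  -- monotonicity of partial sums of γ
  have hsmono : ∀ {m n : ℕ}, m ≤ n →
      (∑ j ∈ Finset.Icc 1 m, ((j:ℝ) + 1) ^ (-a)) ≤ ∑ j ∈ Finset.Icc 1 n, ((j:ℝ) + 1) ^ (-a) :=
    fun {m n} h => Finset.sum_le_sum_of_subset_of_nonneg
      (Finset.Icc_subset_Icc_right h) (fun i _ _ => (hγpos i).le)
  -- lower bound on the gap s_n - s_{n/2}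
  have hgap : ∀ n : ℕ, (n:ℝ)/2 * ((n:ℝ) + 1) ^ (-a) ≤
      (∑ j ∈ Finset.Icc 1 n, ((j:ℝ) + 1) ^ (-a))
        - ∑ j ∈ Finset.Icc 1 (n/2), ((j:ℝ) + 1) ^ (-a) := by
    intro n
    have hsplit : (∑ j ∈ Finset.Ioc 0 (n/2), ((j:ℝ) + 1) ^ (-a))
        + ∑ j ∈ Finset.Ioc (n/2) n, ((j:ℝ) + 1) ^ (-a)
        = ∑ j ∈ Finset.Ioc 0 n, ((j:ℝ) + 1) ^ (-a) :=
      Finset.sum_Ioc_consecutive _ (Nat.zero_le _) (Nat.div_le_self n 2)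
    rw [show Finset.Icc 1 n = Finset.Ioc 0 n from Finset.Icc_add_one_left_eq_Ioc 0 _,
        show Finset.Icc 1 (n/2) = Finset.Ioc 0 (n/2) from Finset.Icc_add_one_left_eq_Ioc 0 _]
    have hlow : ∀ j ∈ Finset.Ioc (n/2) n, ((n:ℝ) + 1) ^ (-a) ≤ ((j:ℝ) + 1) ^ (-a) := by
      intro j hj
      have hjn : (j:ℝ) + 1 ≤ (n:ℝ) + 1 := by
        have := (Finset.mem_Ioc.mp hj).2
        have : (j:ℝ) ≤ (n:ℝ) := by exact_mod_cast this
        linarith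
      exact Real.rpow_le_rpow_of_nonpos (hxpos j) hjn (by linarith)
    have hcard := Finset.card_nsmul_le_sum (Finset.Ioc (n/2) n) _ _ hlow
    rw [Nat.card_Ioc, nsmul_eq_mul] at hcard
    have hhalf : (n:ℝ)/2 ≤ ((n - n/2 : ℕ) : ℝ) := by
      have h2 : n ≤ 2 * (n - n/2) := by omega
      have h3 : (n:ℝ) ≤ 2 * ((n - n/2 : ℕ) : ℝ) := by exact_mod_cast h2
      linarith
    have := mul_le_mul_of_nonneg_right hhalf (hγpos n).le
    linarith
  -- eventual bound: exp gap term ≤ β_n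
  have hlog : ∀ᶠ n : ℕ in atTop,
      b * Real.log ((n:ℝ) + 1) ≤ T'/4 * ((n:ℝ) + 1) ^ (1 - a) := by
    have hc : (0:ℝ) < T'/(4*b) := by positivity
    have h1 := (isLittleO_log_rpow_atTop (show (0:ℝ) < 1 - a by linarith)).def hc
    filter_upwards [htend.eventually h1] with n hn
    rw [Real.norm_eq_abs, Real.norm_eq_abs] at hn
    have hx1 : (1:ℝ) ≤ (n:ℝ) + 1 := by
      have := Nat.cast_nonneg (α := ℝ) n; linarith
    have hlognn : 0 ≤ Real.log ((n:ℝ) + 1) := Real.log_nonneg hx1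
    have hrpnn : 0 ≤ ((n:ℝ) + 1) ^ (1 - a) := (Real.rpow_pos_of_pos (hxpos n) _).le
    rw [abs_of_nonneg hlognn, abs_of_nonneg hrpnn] at hn
    have h2 := mul_le_mul_of_nonneg_left hn hb0.le
    have h3 : b * (T'/(4*b) * ((n:ℝ) + 1) ^ (1 - a)) = T'/4 * ((n:ℝ) + 1) ^ (1 - a) := by
      field_simp
    linarith
  have hEbound : ∀ᶠ n : ℕ in atTop,
      Real.exp (-((∑ j ∈ Finset.Icc 1 n, ((j:ℝ) + 1) ^ (-a))
          - ∑ j ∈ Finset.Icc 1 (n/2), ((j:ℝ) + 1) ^ (-a)) * T')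
        ≤ ((n:ℝ) + 1) ^ (-b) := by
    filter_upwards [hlog, eventually_ge_atTop 1] with n hn hn1
    have hgapn := hgap n
    have hn' : (1:ℝ) ≤ (n:ℝ) := by exact_mod_cast hn1
    have hpow : ((n:ℝ) + 1) ^ (1 - a) = ((n:ℝ) + 1) * ((n:ℝ) + 1) ^ (-a) := by
      rw [show (1:ℝ) - a = 1 + (-a) by ring, Real.rpow_add (hxpos n), Real.rpow_one]
    have h14 : ((n:ℝ) + 1) ^ (1 - a) / 4 ≤ (n:ℝ)/2 * ((n:ℝ) + 1) ^ (-a) := by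
      rw [hpow]
      have h4 : ((n:ℝ) + 1)/4 ≤ (n:ℝ)/2 := by linarith
      nlinarith [hγpos n]
    have hchain : ((n:ℝ) + 1) ^ (1 - a) / 4 * T' ≤
        ((∑ j ∈ Finset.Icc 1 n, ((j:ℝ) + 1) ^ (-a))
          - ∑ j ∈ Finset.Icc 1 (n/2), ((j:ℝ) + 1) ^ (-a)) * T' :=
      mul_le_mul_of_nonneg_right (le_trans h14 hgapn) hT'.le
    rw [show ((n:ℝ) + 1) ^ (-b) = Real.exp (Real.log ((n:ℝ) + 1) * (-b)) from
      Real.rpow_def_of_pos (hxpos n) _]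
    apply Real.exp_le_exp.mpr
    nlinarith
  -- pointwise splitting bound
  have hpoint : ∀ n : ℕ,
      (∑ k ∈ Finset.Icc 1 n, ((k:ℝ) + 1) ^ (-b) * ((k:ℝ) + 1) ^ (-a) *
          Real.exp (-((∑ j ∈ Finset.Icc 1 n, ((j:ℝ) + 1) ^ (-a))
            - ∑ j ∈ Finset.Icc 1 k, ((j:ℝ) + 1) ^ (-a)) * T'))
      ≤ C0 * Real.exp (-((∑ j ∈ Finset.Icc 1 n, ((j:ℝ) + 1) ^ (-a))
            - ∑ j ∈ Finset.Icc 1 (n/2), ((j:ℝ) + 1) ^ (-a)) * T')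
        + ((2:ℝ) ^ b * (Real.exp T' / T')) * ((n:ℝ) + 1) ^ (-b) := by
    intro n
    have hsplit : (∑ k ∈ Finset.Ioc 0 (n/2), ((k:ℝ) + 1) ^ (-b) * ((k:ℝ) + 1) ^ (-a) *
          Real.exp (-((∑ j ∈ Finset.Icc 1 n, ((j:ℝ) + 1) ^ (-a))
            - ∑ j ∈ Finset.Icc 1 k, ((j:ℝ) + 1) ^ (-a)) * T'))
        + ∑ k ∈ Finset.Ioc (n/2) n, ((k:ℝ) + 1) ^ (-b) * ((k:ℝ) + 1) ^ (-a) *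
          Real.exp (-((∑ j ∈ Finset.Icc 1 n, ((j:ℝ) + 1) ^ (-a))
            - ∑ j ∈ Finset.Icc 1 k, ((j:ℝ) + 1) ^ (-a)) * T')
        = ∑ k ∈ Finset.Ioc 0 n, ((k:ℝ) + 1) ^ (-b) * ((k:ℝ) + 1) ^ (-a) *
          Real.exp (-((∑ j ∈ Finset.Icc 1 n, ((j:ℝ) + 1) ^ (-a))
            - ∑ j ∈ Finset.Icc 1 k, ((j:ℝ) + 1) ^ (-a)) * T') :=
      Finset.sum_Ioc_consecutive _ (Nat.zero_le _) (Nat.div_le_self n 2)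
    rw [show Finset.Ioc 0 n = Finset.Icc 1 n from (Finset.Icc_add_one_left_eq_Ioc 0 _).symm] at hsplit
    rw [← hsplit]
    have hA : ∑ k ∈ Finset.Ioc 0 (n/2), ((k:ℝ) + 1) ^ (-b) * ((k:ℝ) + 1) ^ (-a) *
          Real.exp (-((∑ j ∈ Finset.Icc 1 n, ((j:ℝ) + 1) ^ (-a))
            - ∑ j ∈ Finset.Icc 1 k, ((j:ℝ) + 1) ^ (-a)) * T')
        ≤ C0 * Real.exp (-((∑ j ∈ Finset.Icc 1 n, ((j:ℝ) + 1) ^ (-a))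
            - ∑ j ∈ Finset.Icc 1 (n/2), ((j:ℝ) + 1) ^ (-a)) * T') := by
      calc ∑ k ∈ Finset.Ioc 0 (n/2), ((k:ℝ) + 1) ^ (-b) * ((k:ℝ) + 1) ^ (-a) *
            Real.exp (-((∑ j ∈ Finset.Icc 1 n, ((j:ℝ) + 1) ^ (-a))
              - ∑ j ∈ Finset.Icc 1 k, ((j:ℝ) + 1) ^ (-a)) * T')
          ≤ ∑ k ∈ Finset.Ioc 0 (n/2), ((k:ℝ) + 1) ^ (-b) * ((k:ℝ) + 1) ^ (-a) *
            Real.exp (-((∑ j ∈ Finset.Icc 1 n, ((j:ℝ) + 1) ^ (-a))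
              - ∑ j ∈ Finset.Icc 1 (n/2), ((j:ℝ) + 1) ^ (-a)) * T') := by
            apply Finset.sum_le_sum
            intro k hk
            have hk2 : k ≤ n/2 := (Finset.mem_Ioc.mp hk).2
            have := hsmono hk2
            have hexp : Real.exp (-((∑ j ∈ Finset.Icc 1 n, ((j:ℝ) + 1) ^ (-a))
                - ∑ j ∈ Finset.Icc 1 k, ((j:ℝ) + 1) ^ (-a)) * T')
                ≤ Real.exp (-((∑ j ∈ Finset.Icc 1 n, ((j:ℝ) + 1) ^ (-a))
                - ∑ j ∈ Finset.Icc 1 (n/2), ((j:ℝ) + 1) ^ (-a)) * T') := by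
              apply Real.exp_le_exp.mpr
              nlinarith
            exact mul_le_mul_of_nonneg_left hexp
              (mul_pos (hβpos k) (hγpos k)).le
        _ = (∑ k ∈ Finset.Ioc 0 (n/2), ((k:ℝ) + 1) ^ (-b) * ((k:ℝ) + 1) ^ (-a)) *
            Real.exp (-((∑ j ∈ Finset.Icc 1 n, ((j:ℝ) + 1) ^ (-a))
              - ∑ j ∈ Finset.Icc 1 (n/2), ((j:ℝ) + 1) ^ (-a)) * T') := by
            rw [Finset.sum_mul]
        _ ≤ C0 * Real.exp (-((∑ j ∈ Finset.Icc 1 n, ((j:ℝ) + 1) ^ (-a))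
              - ∑ j ∈ Finset.Icc 1 (n/2), ((j:ℝ) + 1) ^ (-a)) * T') := by
            apply mul_le_mul_of_nonneg_right _ (Real.exp_pos _).le
            rw [← show Finset.Icc 1 (n/2) = Finset.Ioc 0 (n/2) from Finset.Icc_add_one_left_eq_Ioc 0 _]
            exact hC0 (n/2)
    have hB : ∑ k ∈ Finset.Ioc (n/2) n, ((k:ℝ) + 1) ^ (-b) * ((k:ℝ) + 1) ^ (-a) *
          Real.exp (-((∑ j ∈ Finset.Icc 1 n, ((j:ℝ) + 1) ^ (-a))
            - ∑ j ∈ Finset.Icc 1 k, ((j:ℝ) + 1) ^ (-a)) * T')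
        ≤ ((2:ℝ) ^ b * (Real.exp T' / T')) * ((n:ℝ) + 1) ^ (-b) := by
      have hβk : ∀ k ∈ Finset.Ioc (n/2) n,
          ((k:ℝ) + 1) ^ (-b) ≤ (2:ℝ) ^ b * ((n:ℝ) + 1) ^ (-b) := by
        intro k hk
        have hk1 : n/2 < k := (Finset.mem_Ioc.mp hk).1
        have h2k : n + 1 ≤ 2 * (k + 1) := by omega
        have h2k' : ((n:ℝ) + 1) / 2 ≤ (k:ℝ) + 1 := by
          have : ((n:ℝ) + 1) ≤ 2 * ((k:ℝ) + 1) := by exact_mod_cast h2k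
          linarith
        have h1 : ((k:ℝ) + 1) ^ (-b) ≤ (((n:ℝ) + 1) / 2) ^ (-b) :=
          Real.rpow_le_rpow_of_nonpos (by positivity) h2k' (by linarith)
        have h2 : (((n:ℝ) + 1) / 2) ^ (-b) = (2:ℝ) ^ b * ((n:ℝ) + 1) ^ (-b) := by
          rw [Real.div_rpow (by positivity) (by norm_num),
            Real.rpow_neg (by norm_num : (0:ℝ) ≤ 2), div_inv_eq_mul]
          ring
        rw [← h2]; exact h1
      calc ∑ k ∈ Finset.Ioc (n/2) n, ((k:ℝ) + 1) ^ (-b) * ((k:ℝ) + 1) ^ (-a) *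
            Real.exp (-((∑ j ∈ Finset.Icc 1 n, ((j:ℝ) + 1) ^ (-a))
              - ∑ j ∈ Finset.Icc 1 k, ((j:ℝ) + 1) ^ (-a)) * T')
          ≤ ∑ k ∈ Finset.Ioc (n/2) n, ((2:ℝ) ^ b * ((n:ℝ) + 1) ^ (-b)) *
            (((k:ℝ) + 1) ^ (-a) *
            Real.exp (-((∑ j ∈ Finset.Icc 1 n, ((j:ℝ) + 1) ^ (-a))
              - ∑ j ∈ Finset.Icc 1 k, ((j:ℝ) + 1) ^ (-a)) * T')) := by
            apply Finset.sum_le_sum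
            intro k hk
            have h1 := hβk k hk
            have h2 : 0 ≤ ((k:ℝ) + 1) ^ (-a) *
                Real.exp (-((∑ j ∈ Finset.Icc 1 n, ((j:ℝ) + 1) ^ (-a))
                - ∑ j ∈ Finset.Icc 1 k, ((j:ℝ) + 1) ^ (-a)) * T') :=
              (mul_pos (hγpos k) (Real.exp_pos _)).le
            calc ((k:ℝ) + 1) ^ (-b) * ((k:ℝ) + 1) ^ (-a) *
                  Real.exp (-((∑ j ∈ Finset.Icc 1 n, ((j:ℝ) + 1) ^ (-a))
                    - ∑ j ∈ Finset.Icc 1 k, ((j:ℝ) + 1) ^ (-a)) * T')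
                = ((k:ℝ) + 1) ^ (-b) * (((k:ℝ) + 1) ^ (-a) *
                  Real.exp (-((∑ j ∈ Finset.Icc 1 n, ((j:ℝ) + 1) ^ (-a))
                    - ∑ j ∈ Finset.Icc 1 k, ((j:ℝ) + 1) ^ (-a)) * T')) := by ring
              _ ≤ ((2:ℝ) ^ b * ((n:ℝ) + 1) ^ (-b)) * (((k:ℝ) + 1) ^ (-a) *
                  Real.exp (-((∑ j ∈ Finset.Icc 1 n, ((j:ℝ) + 1) ^ (-a))
                    - ∑ j ∈ Finset.Icc 1 k, ((j:ℝ) + 1) ^ (-a)) * T')) :=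
                mul_le_mul_of_nonneg_right h1 h2
        _ = ((2:ℝ) ^ b * ((n:ℝ) + 1) ^ (-b)) *
            ∑ k ∈ Finset.Ioc (n/2) n, ((k:ℝ) + 1) ^ (-a) *
            Real.exp (-((∑ j ∈ Finset.Icc 1 n, ((j:ℝ) + 1) ^ (-a))
              - ∑ j ∈ Finset.Icc 1 k, ((j:ℝ) + 1) ^ (-a)) * T') := by
            rw [Finset.mul_sum]
        _ ≤ ((2:ℝ) ^ b * ((n:ℝ) + 1) ^ (-b)) *
            ∑ k ∈ Finset.Icc 1 n, ((k:ℝ) + 1) ^ (-a) *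
            Real.exp (-((∑ j ∈ Finset.Icc 1 n, ((j:ℝ) + 1) ^ (-a))
              - ∑ j ∈ Finset.Icc 1 k, ((j:ℝ) + 1) ^ (-a)) * T') := by
            apply mul_le_mul_of_nonneg_left _ (by positivity)
            apply Finset.sum_le_sum_of_subset_of_nonneg
            · intro k hk
              have := Finset.mem_Ioc.mp hk
              exact Finset.mem_Icc.mpr ⟨by omega, this.2⟩
            · intro i _ _
              exact (mul_pos (hγpos i) (Real.exp_pos _)).le
        _ ≤ ((2:ℝ) ^ b * ((n:ℝ) + 1) ^ (-b)) * (Real.exp T' / T') := by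
            apply mul_le_mul_of_nonneg_left _ (by positivity)
            exact tele_bound T' hT' (fun k => ((k:ℝ) + 1) ^ (-a)) hγpos hγle1 n
        _ = ((2:ℝ) ^ b * (Real.exp T' / T')) * ((n:ℝ) + 1) ^ (-b) := by ring
    linarith
  -- part 1
  have H1 : (fun n : ℕ => ∑ k ∈ Finset.Icc 1 n,
        ((k:ℝ) + 1) ^ (-b) * ((k:ℝ) + 1) ^ (-a) *
          Real.exp (-((∑ j ∈ Finset.Icc 1 n, ((j:ℝ) + 1) ^ (-a))
            - ∑ j ∈ Finset.Icc 1 k, ((j:ℝ) + 1) ^ (-a)) * T'))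
      =O[atTop] fun n : ℕ => ((n:ℝ) + 1) ^ (-b) := by
    rw [isBigO_iff]
    refine ⟨C0 + (2:ℝ) ^ b * (Real.exp T' / T'), ?_⟩
    filter_upwards [hEbound] with n hE
    have hS0 : 0 ≤ ∑ k ∈ Finset.Icc 1 n,
        ((k:ℝ) + 1) ^ (-b) * ((k:ℝ) + 1) ^ (-a) *
          Real.exp (-((∑ j ∈ Finset.Icc 1 n, ((j:ℝ) + 1) ^ (-a))
            - ∑ j ∈ Finset.Icc 1 k, ((j:ℝ) + 1) ^ (-a)) * T') :=
      Finset.sum_nonneg fun k _ =>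
        (mul_pos (mul_pos (hβpos k) (hγpos k)) (Real.exp_pos _)).le
    rw [Real.norm_eq_abs, Real.norm_eq_abs, abs_of_nonneg hS0, abs_of_nonneg (hβpos n).le]
    have h1 := hpoint n
    have h2 := mul_le_mul_of_nonneg_left hE hC0nonneg
    nlinarith
  refine ⟨H1, ?_⟩
  have H2 := (isBigO_refl (fun n : ℕ =>
      (Real.sqrt (((n:ℝ) + 1) ^ (-b)))⁻¹ * (Real.sqrt (((n:ℝ) + 1) ^ (-a)))⁻¹) atTop).mul H1
  refine H2.trans_isLittleO ?_
  have heq : (fun n : ℕ =>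
      ((Real.sqrt (((n:ℝ) + 1) ^ (-b)))⁻¹ * (Real.sqrt (((n:ℝ) + 1) ^ (-a)))⁻¹) *
        ((n:ℝ) + 1) ^ (-b))
      = fun n : ℕ => ((n:ℝ) + 1) ^ (-((b - a)/2)) := by
    funext n
    have hx := hxpos n
    have hx0 : (0:ℝ) ≤ (n:ℝ) + 1 := hx.le
    rw [Real.sqrt_eq_rpow, Real.sqrt_eq_rpow, ← Real.rpow_mul hx0, ← Real.rpow_mul hx0,
      ← Real.rpow_neg hx0, ← Real.rpow_neg hx0, ← Real.rpow_add hx, ← Real.rpow_add hx]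
    congr 1
    ring
  rw [heq, isLittleO_one_iff]
  exact (tendsto_rpow_neg_atTop (by linarith : (0:ℝ) < (b - a)/2)).comp htend
end
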